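/- arXiv:1412.3080 — 2 statements merged into one kernel-verified Lean document; each statement's English description precedes it below -/
import Mathlib

section
/- If p_{b(r)+1}^2 is a sparsely Schemmel totient number of order r, then r < p_{b(r)+2} − p_{b(r)+1}. -/
/-- The Schemmel totient function of order `r` (multiplicative, with
`S r (p^a) = p^(a-1) * (p - r)`; note `p - r = 0` in `ℕ` when `p ≤ r`). -/
def S (r n : ℕ) : ℕ := ∏ q ∈ n.primeFactors, q ^ (n.factorization q - 1) * (q - r)

/-- `b r` is the number of primes `≤ r`. -/
def b (r : ℕ) : ℕ := ((Finset.range (r + 1)).filter Nat.Prime).card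

/-- `p i` is the `i`-th prime (`p 1 = 2`, `p 2 = 3`, ...). -/
noncomputable def p (i : ℕ) : ℕ := Nat.nth Nat.Prime (i - 1)

/-- `n` is a sparsely Schemmel totient number of order `r`. -/
def SST (r n : ℕ) : Prop := 0 < S r n ∧ ∀ m : ℕ, n < m → 0 < S r m → S r n < S r m

/-- Jacobsthal function: the smallest `a` such that every `a` consecutive
integers contain one coprime to `N`. -/
noncomputable def J (N : ℕ) : ℕ := sInf {a : ℕ | ∀ x : ℕ, ∃ y ∈ Finset.Ico x (x + a), Nat.Coprime y N}

/-- `Pk k n` is the `k`-th largest prime divisor of `n` (or `0` if `ω(n) < k`). -/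
def Pk (k n : ℕ) : ℕ := ((n.primeFactors.sort (· ≤ ·)).reverse).getD (k - 1) 0

/-- `Qk r k n` is the `k`-th smallest prime greater than `r` not dividing `n`. -/
noncomputable def Qk (r k n : ℕ) : ℕ := Nat.nth (fun q : ℕ => q.Prime ∧ r < q ∧ ¬ q ∣ n) (k - 1)

/-- `Rn n` is `n` divided by the product of its distinct prime factors. -/
def Rn (n : ℕ) : ℕ := n / ∏ q ∈ n.primeFactors, q


/-!
Let `q < q'` be the first two primes exceeding `r`. Then `q * q' > q ^ 2` has
`S r (q * q') = (q - r) * (q' - r) > 0`, so sparseness of `q ^ 2` forces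
`q * (q - r) < (q - r) * (q' - r)`, i.e. `q < q' - r`.
-/

lemma S_prime_sq {q : ℕ} (r : ℕ) (hq : q.Prime) : S r (q ^ 2) = q * (q - r) := by
  unfold S
  rw [Nat.primeFactors_prime_pow two_ne_zero hq, hq.factorization_pow]
  simp

lemma S_mul_of_prime_of_ne {q q' : ℕ} (r : ℕ) (hq : q.Prime) (hq' : q'.Prime) (hne : q ≠ q') :
    S r (q * q') = (q - r) * (q' - r) := by
  unfold S
  rw [Nat.primeFactors_mul hq.ne_zero hq'.ne_zero, hq.primeFactors, hq'.primeFactors,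
    Finset.prod_union (by simpa using hne), Nat.factorization_mul hq.ne_zero hq'.ne_zero]
  simp [hq.factorization, hq'.factorization, Finsupp.single_apply, hne, hne.symm]

lemma SST.add_lt_of_prime_sq {r q q' : ℕ} (hq : q.Prime) (hq' : q'.Prime) (hrq : r < q)
    (hqq' : q < q') (h : SST r (q ^ 2)) : q + r < q' := by
  have hS : S r (q * q') = (q - r) * (q' - r) := S_mul_of_prime_of_ne r hq hq' hqq'.ne
  have hsparse := h.2 (q * q') (by nlinarith [hq.pos])
    (by rw [hS]; exact Nat.mul_pos (by omega) (by omega))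
  rw [S_prime_sq r hq, hS, mul_comm] at hsparse
  have := Nat.lt_of_mul_lt_mul_left hsparse
  omega

lemma b_eq_count (r : ℕ) : b r = Nat.count Nat.Prime (r + 1) :=
  (Nat.count_eq_card_filter_range _ _).symm

lemma p_succ_prime (i : ℕ) : (p (i + 1)).Prime :=
  Nat.nth_mem_of_infinite Nat.infinite_setOfPred_prime i

lemma p_succ_lt_p_succ_succ (i : ℕ) : p (i + 1) < p (i + 2) :=
  Nat.nth_strictMono Nat.infinite_setOfPred_prime i.lt_succ_self

lemma lt_p_b_succ (r : ℕ) : r < p (b r + 1) := by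
  have := Nat.le_nth_count Nat.infinite_setOfPred_prime (r + 1)
  rw [← b_eq_count] at this
  exact this

theorem stmt9_general (r : ℕ) (h : SST r (p (b r + 1) ^ 2)) :
    r < p (b r + 2) - p (b r + 1) := by
  have : p (b r + 1) + r < p (b r + 2) :=
    h.add_lt_of_prime_sq (p_succ_prime _) (p_succ_prime _) (lt_p_b_succ r)
      (p_succ_lt_p_succ_succ _)
  omega

theorem stmt9 (r : ℕ) (hr : 0 < r) (h : SST r (p (b r + 1) ^ 2)) :
    r < p (b r + 2) - p (b r + 1) :=
  stmt9_general r h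
end

section
/- Let r be a positive integer and n a sparsely Schemmel totient number of order r. Then R(n) < (J_r/r)·Q_1(n)·(Q_1(n) − r), where R(n) = n divided by the product of its distinct prime factors, Q_1(n) is the smallest prime greater than r not dividing n, and J_r = J(r#). -/
/-
Suppose `r R(n) ≥ J_r Q (Q - r)` with `Q = Q_1(n)`. By the definition of `J_r` there is `t` coprime
to `r#` with `R(n)/Q < t ≤ R(n)/Q + J_r`, and the assumed inequality is exactly what makes
`t (Q - r) ≤ R(n)`. Then `m = t Q rad(n)` exceeds `n = R(n) rad(n)` and has all prime factors
`> r`, while `S_r(ab) ≤ a S_r(b)` gives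
`S_r(m) ≤ t (Q - r) ∏_{q ∣ n} (q - r) ≤ R(n) ∏_{q ∣ n} (q - r) = S_r(n)`, contradicting sparseness.
-/

open Finset

lemma prod_primeFactors_pos (n : ℕ) : 0 < ∏ q ∈ n.primeFactors, q :=
  prod_pos fun _ hq => Nat.pos_of_mem_primeFactors hq

lemma Rn_mul_prod_primeFactors (n : ℕ) : Rn n * ∏ q ∈ n.primeFactors, q = n :=
  Nat.div_mul_cancel (Nat.prod_primeFactors_dvd n)

lemma S_eq_Rn_mul (r : ℕ) {n : ℕ} (hn : n ≠ 0) :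
    S r n = Rn n * ∏ q ∈ n.primeFactors, (q - r) := by
  have hpow : ∀ q ∈ n.primeFactors, q ^ (n.factorization q - 1) * q = q ^ n.factorization q := by
    intro q hq
    have hpos := (Nat.prime_of_mem_primeFactors hq).factorization_pos_of_dvd hn
      (Nat.dvd_of_mem_primeFactors hq)
    rw [← pow_succ, Nat.sub_add_cancel hpos]
  have hRn : Rn n = ∏ q ∈ n.primeFactors, q ^ (n.factorization q - 1) := by
    refine Nat.div_eq_of_eq_mul_left (prod_primeFactors_pos n) ?_
    rw [← prod_mul_distrib, prod_congr rfl hpow, ← Nat.support_factorization]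
    exact (Nat.prod_factorization_pow_eq_self hn).symm
  rw [S, prod_mul_distrib, hRn]

lemma S_mul_prod_primeFactors (r : ℕ) {n : ℕ} (hn : n ≠ 0) :
    S r n * ∏ q ∈ n.primeFactors, q = n * ∏ q ∈ n.primeFactors, (q - r) := by
  rw [S_eq_Rn_mul r hn, mul_right_comm, Rn_mul_prod_primeFactors]

lemma S_pos_iff (r n : ℕ) : 0 < S r n ↔ ∀ q ∈ n.primeFactors, r < q := by
  rw [S, CanonicallyOrderedAdd.prod_pos]
  refine forall₂_congr fun q hq => ?_
  rw [CanonicallyOrderedAdd.mul_pos, tsub_pos_iff_lt,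
    and_iff_right (pow_pos (Nat.pos_of_mem_primeFactors hq) _)]

lemma S_prod_of_prime (r : ℕ) {s : Finset ℕ} (hs : ∀ q ∈ s, q.Prime) :
    S r (∏ q ∈ s, q) = ∏ q ∈ s, (q - r) := by
  have hpf := Nat.primeFactors_prod hs
  have hRn : Rn (∏ q ∈ s, q) = 1 := by
    rw [Rn, hpf, Nat.div_self (prod_pos fun q hq => (hs q hq).pos)]
  rw [S_eq_Rn_mul r (prod_ne_zero_iff.2 fun q hq => (hs q hq).ne_zero), hRn, hpf, one_mul]

-- The prime factors of `a` not dividing `b` contribute `q - r ≤ q`.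
lemma S_mul_le (r : ℕ) {a b : ℕ} (ha : a ≠ 0) (hb : b ≠ 0) : S r (a * b) ≤ a * S r b := by
  set C := a.primeFactors \ b.primeFactors
  have hpf : (a * b).primeFactors = b.primeFactors ∪ C := by
    rw [Nat.primeFactors_mul ha hb, union_comm, union_sdiff_self_eq_union]
  have hdisj : Disjoint b.primeFactors C := disjoint_sdiff
  refine Nat.le_of_mul_le_mul_right ?_ (prod_primeFactors_pos (a * b))
  calc S r (a * b) * ∏ q ∈ (a * b).primeFactors, q
      = a * b * ((∏ q ∈ b.primeFactors, (q - r)) * ∏ q ∈ C, (q - r)) := by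
        rw [S_mul_prod_primeFactors r (mul_ne_zero ha hb), hpf, prod_union hdisj]
    _ ≤ a * b * ((∏ q ∈ b.primeFactors, (q - r)) * ∏ q ∈ C, q) := by
        gcongr with q; exact Nat.sub_le q r
    _ = a * (S r b * ∏ q ∈ b.primeFactors, q) * ∏ q ∈ C, q := by
        rw [S_mul_prod_primeFactors r hb]; ring
    _ = a * S r b * ∏ q ∈ (a * b).primeFactors, q := by
        rw [hpf, prod_union hdisj]; ring

lemma SST.ne_zero {r n : ℕ} (h : SST r n) : n ≠ 0 := by
  rintro rfl
  simpa [S] using h.2 1 one_pos (by simp [S])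

lemma exists_coprime_mem_Ico_J {N : ℕ} (hN : 0 < N) (x : ℕ) :
    ∃ y ∈ Ico x (x + J N), y.Coprime N := by
  refine Nat.sInf_mem (s := {a | ∀ x, ∃ y ∈ Ico x (x + a), y.Coprime N})
    ⟨N + 2, fun x => ?_⟩ x
  refine ⟨1 + (x / N + 1) * N, ?_,
    (Nat.coprime_add_mul_right_left 1 N _).2 (Nat.coprime_one_left N)⟩
  have hlt := Nat.lt_div_mul_add (a := x) hN
  have hle := Nat.div_mul_le_self x N
  rw [mem_Ico, add_mul, one_mul]
  omega

lemma lt_of_mem_primeFactors_of_coprime_primorial {r t q : ℕ} (ht : t.Coprime (primorial r))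
    (hq : q ∈ t.primeFactors) : r < q := by
  have hq' : q ∉ Nat.primesLE r := by
    rw [← primeFactors_primorial]
    exact ht.disjoint_primeFactors.notMem_of_mem_left_finset hq
  by_contra! hle
  exact hq' (Nat.mem_primesLE.2 ⟨hle, Nat.prime_of_mem_primeFactors hq⟩)

lemma Qk_one_spec (r : ℕ) {n : ℕ} (hn : n ≠ 0) :
    (Qk r 1 n).Prime ∧ r < Qk r 1 n ∧ ¬ Qk r 1 n ∣ n := by
  refine Nat.nth_mem_of_infinite (p := fun q => q.Prime ∧ r < q ∧ ¬ q ∣ n)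
    (Set.infinite_of_forall_exists_gt fun a => ?_) 0
  obtain ⟨q, hq, hqp⟩ := Nat.exists_infinite_primes (a + r + n + 1)
  exact ⟨q, ⟨hqp, by omega, fun hd => by have := Nat.le_of_dvd (by omega) hd; omega⟩, by omega⟩

lemma mul_sub_le_of_le_div_add {t R Q J r : ℕ} (ht : t ≤ R / Q + J)
    (hJ : J * Q * (Q - r) ≤ r * R) (hrQ : r ≤ Q) : t * (Q - r) ≤ R := by
  obtain ⟨d, rfl⟩ := Nat.exists_eq_add_of_le hrQ
  rw [Nat.add_sub_cancel_left] at hJ ⊢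
  rcases Nat.eq_zero_or_pos (r + d) with h0 | hpos
  · simp [show d = 0 by omega]
  have htQ : t * (r + d) ≤ R + J * (r + d) := by
    calc t * (r + d) ≤ (R / (r + d) + J) * (r + d) := Nat.mul_le_mul_right _ ht
      _ ≤ R + J * (r + d) := by
        rw [add_mul]; exact Nat.add_le_add_right (Nat.div_mul_le_self _ _) _
  refine Nat.le_of_mul_le_mul_right ?_ hpos
  nlinarith [Nat.mul_le_mul_right d htQ]

theorem exists_lt_S_le_of_J_mul_le {r n Q : ℕ} (hn : 0 < S r n) (hQ : Q.Prime) (hrQ : r < Q)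
    (hQn : ¬ Q ∣ n) (hJ : J (primorial r) * Q * (Q - r) ≤ r * Rn n) :
    ∃ m, n < m ∧ 0 < S r m ∧ S r m ≤ S r n := by
  have hn0 : n ≠ 0 := by rintro rfl; exact hQn (dvd_zero Q)
  obtain ⟨t, ht, htN⟩ := exists_coprime_mem_Ico_J (primorial_pos r) (Rn n / Q + 1)
  rw [mem_Ico] at ht
  have ht0 : t ≠ 0 := (Nat.succ_pos _).trans_le ht.1 |>.ne'
  have hRt : Rn n < t * Q := (Nat.div_lt_iff_lt_mul hQ.pos).1 ht.1
  have htR : t * (Q - r) ≤ Rn n :=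
    mul_sub_le_of_le_div_add (by have := ht.2; omega) hJ hrQ.le
  set s := insert Q n.primeFactors
  have hQs : Q ∉ n.primeFactors := fun h => hQn (Nat.dvd_of_mem_primeFactors h)
  have hs : ∀ q ∈ s, q.Prime :=
    forall_mem_insert _ _ _ |>.2 ⟨hQ, fun _ hq => Nat.prime_of_mem_primeFactors hq⟩
  have hs0 : ∏ q ∈ s, q ≠ 0 := prod_ne_zero_iff.2 fun q hq => (hs q hq).ne_zero
  refine ⟨t * ∏ q ∈ s, q, ?_, ?_, ?_⟩
  · calc n = Rn n * ∏ q ∈ n.primeFactors, q := (Rn_mul_prod_primeFactors n).symm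
      _ < t * Q * ∏ q ∈ n.primeFactors, q :=
        Nat.mul_lt_mul_of_pos_right hRt (prod_primeFactors_pos n)
      _ = t * ∏ q ∈ s, q := by rw [prod_insert hQs, mul_assoc]
  · rw [S_pos_iff]
    intro q hq
    rw [Nat.primeFactors_mul ht0 hs0, Nat.primeFactors_prod hs, mem_union, mem_insert] at hq
    rcases hq with hq | rfl | hq
    · exact lt_of_mem_primeFactors_of_coprime_primorial htN hq
    · exact hrQ
    · exact (S_pos_iff r n).1 hn q hq
  · calc S r (t * ∏ q ∈ s, q) ≤ t * S r (∏ q ∈ s, q) := S_mul_le r ht0 hs0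
      _ = t * (Q - r) * ∏ q ∈ n.primeFactors, (q - r) := by
        rw [S_prod_of_prime r hs, prod_insert hQs, mul_assoc]
      _ ≤ Rn n * ∏ q ∈ n.primeFactors, (q - r) := Nat.mul_le_mul_right _ htR
      _ = S r n := (S_eq_Rn_mul r hn0).symm

theorem SST.mul_Rn_lt {r n : ℕ} (h : SST r n) :
    r * Rn n < J (primorial r) * Qk r 1 n * (Qk r 1 n - r) := by
  obtain ⟨hQ, hrQ, hQn⟩ := Qk_one_spec r h.ne_zero
  by_contra! hJ
  obtain ⟨m, hnm, hm, hmn⟩ := exists_lt_S_le_of_J_mul_le h.1 hQ hrQ hQn hJ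
  exact (h.2 m hnm hm).not_ge hmn

theorem stmt12 (r n : ℕ) (hr : 0 < r) (h : SST r n) :
    (Rn n : ℝ) < ((J (primorial r) : ℝ) / r) * (Qk r 1 n : ℝ) * ((Qk r 1 n : ℝ) - r) := by
  have hrQ := (Qk_one_spec r h.ne_zero).2.1
  have key : (r : ℝ) * Rn n < J (primorial r) * Qk r 1 n * ((Qk r 1 n : ℝ) - r) := by
    rw [← Nat.cast_sub hrQ.le]
    exact_mod_cast h.mul_Rn_lt
  rw [div_mul_eq_mul_div, div_mul_eq_mul_div, lt_div_iff₀ (by exact_mod_cast hr)]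
  linarith
end
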